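/- The three states |ψ_0⟩ = √(2/11)|Φ_2⟩ ⊕ √(9/11)|Φ_9⟩, |ψ_1⟩ = √(2/11)γ₁(X_2⊗I)|Φ_2⟩ ⊕ √(9/11)(X_9³⊗I)|Φ_9⟩, |ψ_2⟩ = √(2/11)γ₂(Z_2⊗I)|Φ_2⟩ ⊕ √(9/11)(X_9⁶⊗I)|Φ_9⟩ are pairwise orthogonal unit vectors in ℂ¹¹ ⊗ ℂ¹¹, for any unit-modulus complex numbers γ₁, γ₂. -/

import Mathlib

open Complex

noncomputable def Xmat (k : ℕ) : Matrix (Fin k) (Fin k) ℂ :=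
  fun i j => if (i : ℕ) = ((j : ℕ) + 1) % k then 1 else 0

noncomputable def Zmat (k : ℕ) : Matrix (Fin k) (Fin k) ℂ :=
  Matrix.diagonal fun l => Complex.exp (2 * Real.pi * Complex.I * (l : ℕ) / (k : ℕ))

noncomputable def PhiME (k : ℕ) : EuclideanSpace ℂ (Fin k × Fin k) :=
  WithLp.toLp 2 fun p => if p.1 = p.2 then ((1 / Real.sqrt k : ℝ) : ℂ) else 0

noncomputable def opL {k : ℕ} (U : Matrix (Fin k) (Fin k) ℂ)
    (v : EuclideanSpace ℂ (Fin k × Fin k)) : EuclideanSpace ℂ (Fin k × Fin k) :=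
  WithLp.toLp 2 fun p => ∑ i, U p.1 i * v (i, p.2)

/-- Embedding of `ℂ² ⊗ ℂ²` into `ℂ¹¹ ⊗ ℂ¹¹` via `ℂ¹¹ = ℂ² ⊕ ℂ⁹` (indices 0,1). -/
noncomputable def lift2 (v : EuclideanSpace ℂ (Fin 2 × Fin 2)) :
    EuclideanSpace ℂ (Fin 11 × Fin 11) :=
  WithLp.toLp 2 fun p => if h : (p.1 : ℕ) < 2 ∧ (p.2 : ℕ) < 2 then v (⟨p.1, h.1⟩, ⟨p.2, h.2⟩) else 0

/-- Embedding of `ℂ⁹ ⊗ ℂ⁹` into `ℂ¹¹ ⊗ ℂ¹¹` via `ℂ¹¹ = ℂ² ⊕ ℂ⁹` (indices 2,…,10). -/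
noncomputable def lift9 (v : EuclideanSpace ℂ (Fin 9 × Fin 9)) :
    EuclideanSpace ℂ (Fin 11 × Fin 11) :=
  WithLp.toLp 2 fun p =>
    if h : 2 ≤ (p.1 : ℕ) ∧ 2 ≤ (p.2 : ℕ) then
      v (⟨(p.1 : ℕ) - 2, by have := p.1.isLt; omega⟩,
         ⟨(p.2 : ℕ) - 2, by have := p.2.isLt; omega⟩)
    else 0

noncomputable def psiState0 : EuclideanSpace ℂ (Fin 11 × Fin 11) :=
  (Real.sqrt (2 / 11) : ℂ) • lift2 (PhiME 2) + (Real.sqrt (9 / 11) : ℂ) • lift9 (PhiME 9)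

noncomputable def psiState1 (γ₁ : ℂ) : EuclideanSpace ℂ (Fin 11 × Fin 11) :=
  (Real.sqrt (2 / 11) : ℂ) • (γ₁ • lift2 (opL (Xmat 2) (PhiME 2)))
    + (Real.sqrt (9 / 11) : ℂ) • lift9 (opL (Xmat 9 ^ 3) (PhiME 9))

noncomputable def psiState2 (γ₂ : ℂ) : EuclideanSpace ℂ (Fin 11 × Fin 11) :=
  (Real.sqrt (2 / 11) : ℂ) • (γ₂ • lift2 (opL (Zmat 2) (PhiME 2)))
    + (Real.sqrt (9 / 11) : ℂ) • lift9 (opL (Xmat 9 ^ 6) (PhiME 9))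

/-! Both blocks `ℂ² ⊗ ℂ²` and `ℂ⁹ ⊗ ℂ⁹` embed isometrically and orthogonally into `ℂ¹¹ ⊗ ℂ¹¹`,
so with `|α|² + |β|² = 1` the vectors `α u_i + β u'_i` are orthonormal as soon as both block
families `u`, `u'` are. Since `⟨(U ⊗ I)Φ_k, (V ⊗ I)Φ_k⟩ = tr(U†V)/k`, this is Hilbert–Schmidt
orthogonality of `1, X₂, Z₂` (up to the unit phases `γᵢ`) and of `1, X₉³, X₉⁶`, shifts by
`0, 3, 6`, which are distinct mod `9`. -/

section Orthonormal

variable {𝕜 E F ι : Type*} [RCLike 𝕜] [NormedAddCommGroup E] [InnerProductSpace 𝕜 E]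
  [NormedAddCommGroup F] [InnerProductSpace 𝕜 F]

theorem Orthonormal.comp_of_inner_map_map {v : ι → E} (hv : Orthonormal 𝕜 v) {f : E → F}
    (hf : ∀ x y, inner 𝕜 (f x) (f y) = inner 𝕜 x y) : Orthonormal 𝕜 (f ∘ v) := by
  classical
  rw [orthonormal_iff_ite] at hv ⊢
  simpa [hf] using hv

theorem Orthonormal.smul_of_norm_eq_one {v : ι → E} (hv : Orthonormal 𝕜 v) {c : ι → 𝕜}
    (hc : ∀ i, ‖c i‖ = 1) : Orthonormal 𝕜 fun i => c i • v i := by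
  classical
  rw [orthonormal_iff_ite] at hv ⊢
  intro i j
  rw [inner_smul_left, inner_smul_right, hv]
  split_ifs with hij
  · subst hij
    rw [mul_one, RCLike.conj_mul, hc, RCLike.ofReal_one, one_pow]
  · simp

theorem Orthonormal.smul_add_smul {u u' : ι → E} (hu : Orthonormal 𝕜 u) (hu' : Orthonormal 𝕜 u')
    (huu' : ∀ i j, inner 𝕜 (u i) (u' j) = 0) {α β : 𝕜} (hαβ : ‖α‖ ^ 2 + ‖β‖ ^ 2 = 1) :
    Orthonormal 𝕜 fun i => α • u i + β • u' i := by
  classical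
  rw [orthonormal_iff_ite] at hu hu' ⊢
  intro i j
  have hu'u : inner 𝕜 (u' i) (u j) = 0 := inner_eq_zero_symm.mp (huu' j i)
  simp only [inner_add_left, inner_add_right, inner_smul_left, inner_smul_right, hu, hu', huu',
    hu'u, mul_zero, add_zero, zero_add]
  split_ifs
  · rw [mul_one, mul_one, RCLike.mul_conj, RCLike.mul_conj]
    exact_mod_cast hαβ
  · simp

end Orthonormal

theorem inner_lift2 (v w : EuclideanSpace ℂ (Fin 2 × Fin 2)) :
    inner ℂ (lift2 v) (lift2 w) = inner ℂ v w := by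
  simp only [PiLp.inner_apply]
  refine (Fintype.sum_of_injective (M := ℂ)
    (Prod.map (Fin.castLE (by norm_num)) (Fin.castLE (by norm_num)) :
      Fin 2 × Fin 2 → Fin 11 × Fin 11)
    ((Fin.castLE_injective _).prodMap (Fin.castLE_injective _)) _ _ ?_ fun _ => rfl).symm
  rintro ⟨i, j⟩ hij
  have : ¬ ((i : ℕ) < 2 ∧ (j : ℕ) < 2) := fun h => hij ⟨(⟨i, h.1⟩, ⟨j, h.2⟩), rfl⟩
  simp only [lift2, dif_neg this, inner_zero_left]

theorem inner_lift9 (v w : EuclideanSpace ℂ (Fin 9 × Fin 9)) :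
    inner ℂ (lift9 v) (lift9 w) = inner ℂ v w := by
  simp only [PiLp.inner_apply]
  refine (Fintype.sum_of_injective (M := ℂ)
    (Prod.map (Fin.natAdd 2) (Fin.natAdd 2) : Fin 9 × Fin 9 → Fin 11 × Fin 11)
    ((Fin.natAdd_injective _ _).prodMap (Fin.natAdd_injective _ _)) _ _ ?_ ?_).symm
  · rintro ⟨i, j⟩ hij
    have : ¬ (2 ≤ (i : ℕ) ∧ 2 ≤ (j : ℕ)) := fun h =>
      hij ⟨(⟨i - 2, by omega⟩, ⟨j - 2, by omega⟩), by ext <;> simp <;> omega⟩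
    simp only [lift9, dif_neg this, inner_zero_left]
  · intro p
    simp [lift9]

theorem inner_lift2_lift9 (v : EuclideanSpace ℂ (Fin 2 × Fin 2))
    (w : EuclideanSpace ℂ (Fin 9 × Fin 9)) : inner ℂ (lift2 v) (lift9 w) = 0 := by
  refine Finset.sum_eq_zero fun p _ => ?_
  by_cases hp : (p.1 : ℕ) < 2
  · have : ¬ (2 ≤ (p.1 : ℕ) ∧ 2 ≤ (p.2 : ℕ)) := by omega
    simp only [lift9, dif_neg this, inner_zero_right]
  · have : ¬ ((p.1 : ℕ) < 2 ∧ (p.2 : ℕ) < 2) := by omega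
    simp only [lift2, dif_neg this, inner_zero_left]

theorem opL_PhiME_apply {k : ℕ} (U : Matrix (Fin k) (Fin k) ℂ) (p : Fin k × Fin k) :
    opL U (PhiME k) p = U p.1 p.2 * ((1 / Real.sqrt k : ℝ) : ℂ) := by
  simp [opL, PhiME]

theorem opL_one_PhiME (k : ℕ) : opL 1 (PhiME k) = PhiME k := by
  ext p
  rw [opL_PhiME_apply, Matrix.one_apply, PhiME, PiLp.toLp_apply]
  split_ifs <;> simp

theorem inner_opL_PhiME {k : ℕ} (U V : Matrix (Fin k) (Fin k) ℂ) :
    inner ℂ (opL U (PhiME k)) (opL V (PhiME k))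
      = (∑ p : Fin k × Fin k, starRingEnd ℂ (U p.1 p.2) * V p.1 p.2) / k := by
  have hsq : ((1 / Real.sqrt k : ℝ) : ℂ) * ((1 / Real.sqrt k : ℝ) : ℂ) = 1 / k := by
    rw [← ofReal_mul, div_mul_div_comm, one_mul, Real.mul_self_sqrt (Nat.cast_nonneg k)]
    push_cast; rfl
  simp only [PiLp.inner_apply, RCLike.inner_apply, opL_PhiME_apply, map_mul, conj_ofReal]
  rw [Finset.sum_div]
  refine Finset.sum_congr rfl fun p _ => ?_
  rw [div_eq_mul_one_div _ (k : ℂ), ← hsq]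
  ring

theorem Xmat_pow_apply {k : ℕ} [NeZero k] (a : ℕ) (i j : Fin k) :
    (Xmat k ^ a) i j = if i = Fin.ofNat k (j + a) then 1 else 0 := by
  induction a generalizing i j with
  | zero => simp [Matrix.one_apply, Fin.ext_iff]
  | succ a ih =>
    rw [pow_succ, Matrix.mul_apply, Finset.sum_eq_single (Fin.ofNat k (j + 1))]
    · simp [ih, Xmat, Fin.ext_iff, add_assoc, add_comm 1 a]
    · intro b _ hb
      have hb' : (b : ℕ) ≠ ((j : ℕ) + 1) % k := fun h => hb (Fin.ext h)
      simp [Xmat, hb']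
    · simp

theorem sum_Xmat_pow_conj_mul {k : ℕ} [NeZero k] (a b : ℕ) :
    ∑ p : Fin k × Fin k, starRingEnd ℂ ((Xmat k ^ a) p.1 p.2) * (Xmat k ^ b) p.1 p.2
      = if a % k = b % k then (k : ℂ) else 0 := by
  have hshift (j : Fin k) : Fin.ofNat k (j + a) = Fin.ofNat k (j + b) ↔ a % k = b % k := by
    simp only [Fin.ext_iff, Fin.val_ofNat]
    exact ⟨Nat.ModEq.add_left_cancel' _, Nat.ModEq.add_left _⟩
  simp only [Xmat_pow_apply, apply_ite (starRingEnd ℂ), map_one, map_zero, ite_zero_mul_ite_zero,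
    mul_one, Fintype.sum_prod_type_right, ite_and, Finset.sum_ite_eq', Finset.mem_univ, if_true,
    hshift]
  split_ifs <;> simp

theorem orthonormal_opL_PhiME {ι : Type*} [DecidableEq ι] {k : ℕ} [NeZero k]
    {U : ι → Matrix (Fin k) (Fin k) ℂ}
    (hU : ∀ i j, ∑ p : Fin k × Fin k, starRingEnd ℂ (U i p.1 p.2) * U j p.1 p.2
      = if i = j then (k : ℂ) else 0) :
    Orthonormal ℂ fun i => opL (U i) (PhiME k) := by
  rw [orthonormal_iff_ite]
  intro i j
  rw [inner_opL_PhiME, hU]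
  split_ifs <;> simp [NeZero.ne k]

theorem Xmat_two : Xmat 2 = !![0, 1; 1, 0] := by
  ext i j
  fin_cases i <;> fin_cases j <;> simp [Xmat]

theorem Zmat_two : Zmat 2 = !![1, 0; 0, -1] := by
  have hpi : Complex.exp (2 * Real.pi * Complex.I / 2) = -1 := by
    rw [← Complex.exp_pi_mul_I]
    ring_nf
  ext i j
  fin_cases i <;> fin_cases j <;> simp [Zmat, hpi]

theorem orthonormal_opL_one_Xmat_Zmat_PhiME_two :
    Orthonormal ℂ fun i => opL (![1, Xmat 2, Zmat 2] i) (PhiME 2) := by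
  refine orthonormal_opL_PhiME fun i j => ?_
  fin_cases i <;> fin_cases j <;>
    norm_num [Fintype.sum_prod_type, Fin.sum_univ_two, Matrix.one_apply, Xmat_two, Zmat_two]

theorem orthonormal_Xmat_pow_of_injective {ι : Type*} [DecidableEq ι] {k : ℕ} [NeZero k]
    {a : ι → ℕ} (ha : Function.Injective fun i => a i % k) :
    Orthonormal ℂ fun i => opL (Xmat k ^ a i) (PhiME k) :=
  orthonormal_opL_PhiME fun i j => by
    rw [sum_Xmat_pow_conj_mul]
    exact if_congr ha.eq_iff rfl rfl

/-- `|ψ_0⟩, |ψ_1⟩, |ψ_2⟩` are pairwise orthogonal unit vectors in `ℂ¹¹ ⊗ ℂ¹¹`. -/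
theorem psiStates_orthonormal (γ₁ γ₂ : ℂ) (h₁ : ‖γ₁‖ = 1) (h₂ : ‖γ₂‖ = 1) :
    Orthonormal ℂ ![psiState0, psiState1 γ₁, psiState2 γ₂] := by
  have hbell : Orthonormal ℂ fun i =>
      ![1, γ₁, γ₂] i • lift2 (opL (![1, Xmat 2, Zmat 2] i) (PhiME 2)) :=
    (orthonormal_opL_one_Xmat_Zmat_PhiME_two.comp_of_inner_map_map inner_lift2).smul_of_norm_eq_one
      fun i => by fin_cases i <;> simp [h₁, h₂]
  have hclock : Orthonormal ℂ fun i : Fin 3 =>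
      lift9 (opL (Xmat 9 ^ (![0, 3, 6] i : ℕ)) (PhiME 9)) :=
    (orthonormal_Xmat_pow_of_injective (a := ![0, 3, 6]) (by decide)).comp_of_inner_map_map
      inner_lift9
  have hweights : ‖(Real.sqrt (2 / 11) : ℂ)‖ ^ 2 + ‖(Real.sqrt (9 / 11) : ℂ)‖ ^ 2 = 1 := by
    rw [Complex.norm_real, Complex.norm_real, Real.norm_eq_abs, Real.norm_eq_abs, sq_abs, sq_abs,
      Real.sq_sqrt, Real.sq_sqrt] <;> norm_num
  have hpsi : ![psiState0, psiState1 γ₁, psiState2 γ₂] = fun i =>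
      (Real.sqrt (2 / 11) : ℂ) • (![1, γ₁, γ₂] i • lift2 (opL (![1, Xmat 2, Zmat 2] i) (PhiME 2)))
        + (Real.sqrt (9 / 11) : ℂ) • lift9 (opL (Xmat 9 ^ (![0, 3, 6] i : ℕ)) (PhiME 9)) := by
    funext i
    fin_cases i <;> simp [psiState0, psiState1, psiState2, opL_one_PhiME]
  rw [hpsi]
  refine hbell.smul_add_smul hclock (fun _ _ => ?_) hweights
  rw [inner_smul_left, inner_lift2_lift9, mul_zero]
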